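/- arXiv:1301.1524 — 3 statements merged into one kernel-verified Lean document; each statement's English description precedes it below -/
import Mathlib

section
/- Let n be a positive integer and b > 0. Then for every smooth ψ : ℝⁿ → ℂ compactly supported in ℝⁿ \ {0}, Re ∫_{ℝⁿ} conj(∇ψ(x)) · ∇(|x|^b ψ(x)) dx = ∫_{ℝⁿ} |∇(|x|^{b/2} ψ(x))|² dx − (b²/4) ∫_{ℝⁿ} |x|^{b−2} |ψ(x)|² dx. (Operator form: ½(|p|²|q|^b + |q|^b|p|²) = |q|^{b/2}(|p|² − (b²/4)|q|^{−2})|q|^{b/2}.) -/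
open MeasureTheory Real

/-- The sesquilinear gradient form `Re ∫ conj(∇ψ(x)) · ∇φ(x) dx`. -/
noncomputable def gradForm (n : ℕ) (ψ φ : EuclideanSpace ℝ (Fin n) → ℂ) : ℝ :=
  (∫ x : EuclideanSpace ℝ (Fin n),
      ∑ i : Fin n,
        (starRingEnd ℂ) (fderiv ℝ ψ x (EuclideanSpace.single i 1)) *
          fderiv ℝ φ x (EuclideanSpace.single i 1)).re


lemma aux_hasFDerivAt (n : ℕ) (c : ℝ) {x : EuclideanSpace ℝ (Fin n)} (hx : x ≠ 0) :
    HasFDerivAt (fun y : EuclideanSpace ℝ (Fin n) => ‖y‖ ^ c)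
      ((c * ‖x‖ ^ (c - 2)) • innerSL ℝ x) x := by
  have hr : (0:ℝ) < ‖x‖ := norm_pos_iff.2 hx
  have h1 : HasFDerivAt (fun y : EuclideanSpace ℝ (Fin n) => ‖y‖ ^ 2)
      (2 • innerSL ℝ x) x := (hasStrictFDerivAt_norm_sq x).hasFDerivAt
  have h2 : HasDerivAt (fun t : ℝ => t ^ (c/2)) (c/2 * (‖x‖^2) ^ (c/2 - 1)) (‖x‖^2) :=
    Real.hasDerivAt_rpow_const (Or.inl (by positivity))
  have h3 := h2.comp_hasFDerivAt x h1
  have hfun : (fun y : EuclideanSpace ℝ (Fin n) => ‖y‖ ^ c)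
      = (fun t : ℝ => t ^ (c/2)) ∘ (fun y : EuclideanSpace ℝ (Fin n) => ‖y‖ ^ 2) := by
    funext y
    simp only [Function.comp_apply]
    rw [← Real.rpow_natCast ‖y‖ 2, ← Real.rpow_mul (norm_nonneg _)]
    congr 1; ring
  rw [hfun]
  refine h3.congr_fderiv ?_
  ext y
  simp only [ContinuousLinearMap.smul_apply, innerSL_apply_apply, smul_eq_mul]
  have : ((‖x‖:ℝ)^2) ^ (c/2 - 1) = ‖x‖ ^ (c - 2) := by
    rw [← Real.rpow_natCast ‖x‖ 2, ← Real.rpow_mul (norm_nonneg _)]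
    congr 1; ring
  rw [this]
  simp only [ContinuousLinearMap.smul_apply, innerSL_apply_apply, smul_eq_mul, nsmul_eq_mul,
    Nat.cast_ofNat]
  ring

lemma aux_complex (u a : ℝ) (z w : ℂ) :
    ((starRingEnd ℂ) z * ((u*u) • z + (2*(u*a)) • w)).re
      = ‖u • z + a • w‖^2 - a^2 * ‖w‖^2 := by
  simp only [Complex.sq_norm, Complex.normSq_apply, Complex.mul_re,
    Complex.add_re, Complex.add_im, Complex.conj_re, Complex.conj_im, Complex.smul_re,
    Complex.smul_im, smul_eq_mul]
  ring

lemma aux_fderiv_zero (n : ℕ) {f : EuclideanSpace ℝ (Fin n) → ℂ}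
    {x : EuclideanSpace ℝ (Fin n)} (hx : x ∉ tsupport f) : fderiv ℝ f x = 0 := by
  by_contra h
  exact hx (support_fderiv_subset (𝕜 := ℝ) h)

lemma aux_key (n : ℕ) (b : ℝ) (hb : 0 < b) (ψ : EuclideanSpace ℝ (Fin n) → ℂ)
    (hsmooth : ContDiff ℝ (⊤ : ℕ∞) ψ) (h0 : (0 : EuclideanSpace ℝ (Fin n)) ∉ tsupport ψ)
    (x : EuclideanSpace ℝ (Fin n)) :
    (∑ i : Fin n, (starRingEnd ℂ) (fderiv ℝ ψ x (EuclideanSpace.single i 1)) *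
        fderiv ℝ (fun y : EuclideanSpace ℝ (Fin n) => (‖y‖ ^ b : ℝ) • ψ y) x
          (EuclideanSpace.single i 1)).re
      = (∑ i : Fin n,
          ‖fderiv ℝ (fun y : EuclideanSpace ℝ (Fin n) => (‖y‖ ^ (b/2) : ℝ) • ψ y) x
              (EuclideanSpace.single i 1)‖ ^ 2)
        - b^2/4 * (‖x‖ ^ (b-2) * ‖ψ x‖^2) := by
  by_cases hx : x ∈ tsupport ψ
  · have hx0 : x ≠ 0 := fun h => h0 (h ▸ hx)
    have hr : (0:ℝ) < ‖x‖ := norm_pos_iff.2 hx0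
    have hdψ : DifferentiableAt ℝ ψ x := (hsmooth.differentiable (by simp)).differentiableAt
    have hwb := aux_hasFDerivAt n b hx0
    have hwh := aux_hasFDerivAt n (b/2) hx0
    set u : ℝ := ‖x‖ ^ (b/2) with hu
    set a : Fin n → ℝ := fun i => b/2 * ‖x‖ ^ (b/2 - 2) * x i with ha
    set p : Fin n → ℂ := fun i => fderiv ℝ ψ x (EuclideanSpace.single i 1) with hp
    have hinner : ∀ i : Fin n, (innerSL ℝ x) (EuclideanSpace.single i (1:ℝ)) = x i := by
      intro i
      simp [EuclideanSpace.inner_single_right, real_inner_comm]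
    have huu : u * u = ‖x‖ ^ b := by
      rw [hu, ← Real.rpow_add hr]; congr 1; ring
    have hmix : ∀ i, b * ‖x‖ ^ (b-2) * x i = 2 * (u * a i) := by
      intro i
      have h' : u * (‖x‖ ^ (b/2 - 2)) = ‖x‖ ^ (b - 2) := by
        rw [hu, ← Real.rpow_add hr]; congr 1; ring
      show b * ‖x‖ ^ (b-2) * x i = 2 * (u * (b/2 * ‖x‖ ^ (b/2 - 2) * x i))
      rw [← h']; ring
    have h1 : ∀ i : Fin n,
        fderiv ℝ (fun y : EuclideanSpace ℝ (Fin n) => (‖y‖ ^ b : ℝ) • ψ y) x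
          (EuclideanSpace.single i 1) = (u*u) • p i + (2*(u * a i)) • ψ x := by
      intro i
      rw [fderiv_fun_smul hwb.differentiableAt hdψ, hwb.fderiv]
      simp only [ContinuousLinearMap.add_apply, ContinuousLinearMap.smul_apply,
        ContinuousLinearMap.smulRight_apply, hinner i, hp, huu, smul_eq_mul]
      rw [← hmix i]
    have h2 : ∀ i : Fin n,
        fderiv ℝ (fun y : EuclideanSpace ℝ (Fin n) => (‖y‖ ^ (b/2) : ℝ) • ψ y) x
          (EuclideanSpace.single i 1) = u • p i + (a i) • ψ x := by
      intro i
      rw [fderiv_fun_smul hwh.differentiableAt hdψ, hwh.fderiv]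
      simp only [ContinuousLinearMap.add_apply, ContinuousLinearMap.smul_apply,
        ContinuousLinearMap.smulRight_apply, hinner i, hp, ha, hu, smul_eq_mul]
    have hsum : ∑ i : Fin n, (a i)^2 = b^2/4 * ‖x‖ ^ (b-2) := by
      have hx2 : ∑ i : Fin n, (x i)^2 = ‖x‖^2 := by
        rw [EuclideanSpace.norm_eq, Real.sq_sqrt (by positivity)]
        simp [sq_abs]
      have hr4 : (‖x‖ ^ (b/2 - 2))^2 * ‖x‖^2 = ‖x‖ ^ (b - 2) := by
        rw [← Real.rpow_natCast (‖x‖ ^ (b/2-2)) 2, ← Real.rpow_natCast ‖x‖ 2,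
          ← Real.rpow_mul (norm_nonneg _), ← Real.rpow_add hr]
        congr 1; push_cast; ring
      calc ∑ i : Fin n, (a i)^2
          = (b/2 * ‖x‖ ^ (b/2-2))^2 * ∑ i : Fin n, (x i)^2 := by
            rw [Finset.mul_sum]; congr 1; funext i; rw [ha]; ring
        _ = b^2/4 * ((‖x‖ ^ (b/2-2))^2 * ‖x‖^2) := by rw [hx2]; ring
        _ = b^2/4 * ‖x‖ ^ (b-2) := by rw [hr4]
    rw [Complex.re_sum]
    calc ∑ i : Fin n, ((starRingEnd ℂ) (fderiv ℝ ψ x (EuclideanSpace.single i 1)) *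
            fderiv ℝ (fun y : EuclideanSpace ℝ (Fin n) => (‖y‖ ^ b : ℝ) • ψ y) x
              (EuclideanSpace.single i 1)).re
        = ∑ i : Fin n, (‖u • p i + (a i) • ψ x‖^2 - (a i)^2 * ‖ψ x‖^2) := by
          refine Finset.sum_congr rfl fun i _ => ?_
          rw [h1 i]
          exact aux_complex u (a i) (p i) (ψ x)
      _ = (∑ i : Fin n, ‖u • p i + (a i) • ψ x‖^2) - (∑ i : Fin n, (a i)^2) * ‖ψ x‖^2 := by
          rw [Finset.sum_sub_distrib, Finset.sum_mul]
      _ = (∑ i : Fin n,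
            ‖fderiv ℝ (fun y : EuclideanSpace ℝ (Fin n) => (‖y‖ ^ (b/2) : ℝ) • ψ y) x
                (EuclideanSpace.single i 1)‖ ^ 2)
          - b^2/4 * (‖x‖ ^ (b-2) * ‖ψ x‖^2) := by
          rw [hsum]
          congr 1
          · exact (Finset.sum_congr rfl fun i _ => by rw [h2 i]).symm
          · ring
  · have hψ0 : ψ x = 0 := image_eq_zero_of_notMem_tsupport hx
    have hdψ : fderiv ℝ ψ x = 0 := aux_fderiv_zero n hx
    have hsub : ∀ c : ℝ, x ∉ tsupport (fun y : EuclideanSpace ℝ (Fin n) => (‖y‖ ^ c : ℝ) • ψ y) := by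
      intro c hmem
      exact hx (closure_mono (Function.support_subset_iff.2 fun y hy => by
        intro h; exact hy (by rw [h, smul_zero])) hmem)
    have hd1 := aux_fderiv_zero n (hsub b)
    have hd2 := aux_fderiv_zero n (hsub (b/2))
    simp only [hdψ, hd1, hd2, ContinuousLinearMap.zero_apply, map_zero, zero_mul,
      hψ0, norm_zero]
    simp


lemma aux_contDiff (n : ℕ) (c : ℝ) (ψ : EuclideanSpace ℝ (Fin n) → ℂ)
    (hsmooth : ContDiff ℝ (⊤ : ℕ∞) ψ) (h0 : (0 : EuclideanSpace ℝ (Fin n)) ∉ tsupport ψ) :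
    ContDiff ℝ (⊤ : ℕ∞) (fun y : EuclideanSpace ℝ (Fin n) => (‖y‖ ^ c : ℝ) • ψ y) := by
  rw [contDiff_iff_contDiffAt]
  intro x
  by_cases hx : x ∈ tsupport ψ
  · have hx0 : x ≠ 0 := fun h => h0 (h ▸ hx)
    have h1 : ContDiffAt ℝ (⊤ : ℕ∞) (fun y : EuclideanSpace ℝ (Fin n) => (‖y‖ ^ c : ℝ)) x :=
      (Real.contDiffAt_rpow_const_of_ne (norm_ne_zero_iff.2 hx0)).comp x
        (contDiffAt_norm ℝ hx0)
    exact h1.smul hsmooth.contDiffAt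
  · have hev : ∀ᶠ y in nhds x, ψ y = 0 := by
      filter_upwards [(isClosed_tsupport ψ).isOpen_compl.mem_nhds hx] with y hy
      exact image_eq_zero_of_notMem_tsupport hy
    refine (contDiffAt_const (c := (0:ℂ))).congr_of_eventuallyEq ?_
    filter_upwards [hev] with y hy
    rw [hy, smul_zero]

lemma aux_smul_nmem (n : ℕ) (c : ℝ) (ψ : EuclideanSpace ℝ (Fin n) → ℂ)
    {x : EuclideanSpace ℝ (Fin n)} (hx : x ∉ tsupport ψ) :
    x ∉ tsupport (fun y : EuclideanSpace ℝ (Fin n) => (‖y‖ ^ c : ℝ) • ψ y) := by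
  intro hmem
  exact hx (closure_mono (Function.support_subset_iff.2 fun y hy => by
    intro h; exact hy (by rw [h, smul_zero])) hmem)

/-- Ground state factorization of the Jordan product for `a = 2`:
`½(|p|²|q|^b + |q|^b|p|²) = |q|^{b/2}(|p|² - (b²/4)|q|^{-2})|q|^{b/2}` as
quadratic forms on smooth functions compactly supported in `ℝⁿ \ {0}`. -/
theorem gradForm_ground_state_identity
    (n : ℕ) (hn : 0 < n) (b : ℝ) (hb : 0 < b)
    (ψ : EuclideanSpace ℝ (Fin n) → ℂ)
    (hsmooth : ContDiff ℝ (⊤ : ℕ∞) ψ) (hsupp : HasCompactSupport ψ)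
    (h0 : (0 : EuclideanSpace ℝ (Fin n)) ∉ tsupport ψ) :
    gradForm n ψ (fun x => (‖x‖ ^ b : ℝ) • ψ x) =
      (∫ x : EuclideanSpace ℝ (Fin n),
          ∑ i : Fin n,
            ‖fderiv ℝ (fun y : EuclideanSpace ℝ (Fin n) => (‖y‖ ^ (b / 2) : ℝ) • ψ y)
                x (EuclideanSpace.single i 1)‖ ^ 2) -
        b ^ 2 / 4 * ∫ x : EuclideanSpace ℝ (Fin n), ‖x‖ ^ (b - 2) * ‖ψ x‖ ^ 2 := by
  have hφs : ContDiff ℝ (⊤ : ℕ∞) (fun y : EuclideanSpace ℝ (Fin n) => (‖y‖ ^ b : ℝ) • ψ y) :=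
    aux_contDiff n b ψ hsmooth h0
  have hχs : ContDiff ℝ (⊤ : ℕ∞) (fun y : EuclideanSpace ℝ (Fin n) => (‖y‖ ^ (b/2) : ℝ) • ψ y) :=
    aux_contDiff n (b/2) ψ hsmooth h0
  have hcψ : Continuous (fderiv ℝ ψ) := hsmooth.continuous_fderiv (by simp)
  have hcφ : Continuous (fderiv ℝ (fun y : EuclideanSpace ℝ (Fin n) => (‖y‖ ^ b : ℝ) • ψ y)) :=
    hφs.continuous_fderiv (by simp)
  have hcχ : Continuous (fderiv ℝ (fun y : EuclideanSpace ℝ (Fin n) => (‖y‖ ^ (b/2) : ℝ) • ψ y)) :=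
    hχs.continuous_fderiv (by simp)
  -- integrability of the complex integrand
  have hF : Integrable (fun x : EuclideanSpace ℝ (Fin n) =>
      ∑ i : Fin n, (starRingEnd ℂ) (fderiv ℝ ψ x (EuclideanSpace.single i 1)) *
        fderiv ℝ (fun y : EuclideanSpace ℝ (Fin n) => (‖y‖ ^ b : ℝ) • ψ y) x
          (EuclideanSpace.single i 1)) := by
    refine Continuous.integrable_of_hasCompactSupport ?_ ?_
    · exact continuous_finset_sum _ fun i _ =>
        (continuous_star.comp (hcψ.clm_apply continuous_const)).mul
          (hcφ.clm_apply continuous_const)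
    · refine HasCompactSupport.intro hsupp fun x hx => ?_
      simp [aux_fderiv_zero n hx]
  have hG : Integrable (fun x : EuclideanSpace ℝ (Fin n) =>
      ∑ i : Fin n,
        ‖fderiv ℝ (fun y : EuclideanSpace ℝ (Fin n) => (‖y‖ ^ (b/2) : ℝ) • ψ y) x
            (EuclideanSpace.single i 1)‖ ^ 2) := by
    refine Continuous.integrable_of_hasCompactSupport ?_ ?_
    · exact continuous_finset_sum _ fun i _ => ((hcχ.clm_apply continuous_const).norm.pow 2)
    · refine HasCompactSupport.intro hsupp fun x hx => ?_
      rw [aux_fderiv_zero n (aux_smul_nmem n (b/2) ψ hx)]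
      simp
  have hH : Integrable (fun x : EuclideanSpace ℝ (Fin n) => ‖x‖ ^ (b-2) * ‖ψ x‖ ^ 2) := by
    refine Continuous.integrable_of_hasCompactSupport ?_ ?_
    · rw [continuous_iff_continuousAt]
      intro x
      by_cases hx : x ∈ tsupport ψ
      · have hx0 : x ≠ 0 := fun h => h0 (h ▸ hx)
        exact ((Real.continuousAt_rpow_const _ _ (Or.inl (norm_ne_zero_iff.2 hx0))).comp
          continuous_norm.continuousAt).mul ((hsmooth.continuous.norm.pow 2).continuousAt)
      · have hev : ∀ᶠ y in nhds x, ψ y = 0 := by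
          filter_upwards [(isClosed_tsupport ψ).isOpen_compl.mem_nhds hx] with y hy
          exact image_eq_zero_of_notMem_tsupport hy
        refine ContinuousAt.congr (f := fun _ => (0:ℝ)) continuousAt_const ?_
        filter_upwards [hev] with y hy
        simp [hy]
    · refine HasCompactSupport.intro hsupp fun x hx => ?_
      rw [image_eq_zero_of_notMem_tsupport hx]; simp
  rw [gradForm]
  have hri := integral_re hF
  simp only [RCLike.re_to_complex] at hri
  rw [← hri]
  rw [integral_congr_ae (Filter.Eventually.of_forall (aux_key n b hb ψ hsmooth h0))]
  rw [integral_sub hG (hH.const_mul _), integral_const_mul]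
end

section
/- Let n ≥ 3 be an integer and 0 < b < n − 2, and set L_{2,b,n} := 4 Γ((n−b+2)/4) Γ((n+b+2)/4) / (Γ((n+b−2)/4) Γ((n−b−2)/4)). Then for every smooth ψ : ℝⁿ → ℂ compactly supported in ℝⁿ \ {0}, equality holds: Re ∫_{ℝⁿ} conj(∇ψ(x)) · ∇(|x|^b ψ(x)) dx = L_{2,b,n} ∫_{ℝⁿ} |x|^{b−2} |ψ(x)|² dx + [ ∫_{ℝⁿ} |∇(|x|^{b/2}ψ(x))|² dx − ((n−2)²/4) ∫_{ℝⁿ} |x|^{b−2} |ψ(x)|² dx ]. -/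
open MeasureTheory Real
open scoped RealInnerProductSpace

section Aux

variable {E : Type*} [NormedAddCommGroup E] [InnerProductSpace ℝ E]

theorem myHasFDerivAt_norm_rpow (x : E) (hx : x ≠ 0) (p : ℝ) :
    HasFDerivAt (fun y : E => ‖y‖ ^ p) ((p * ‖x‖ ^ (p - 2)) • innerSL ℝ x) x := by
  apply HasStrictFDerivAt.hasFDerivAt
  convert (hasStrictFDerivAt_norm_sq x).rpow_const (p := p / 2) (Or.inl (by simp [hx])) using 0
  simp_rw [← Real.rpow_natCast_mul (norm_nonneg _), ← Nat.cast_smul_eq_nsmul ℝ, smul_smul]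
  ring_nf

theorem mySmooth {ψ : E → ℂ} (hsmooth : ContDiff ℝ (⊤ : ℕ∞) ψ)
    (h0 : (0 : E) ∉ tsupport ψ) (p : ℝ) :
    ContDiff ℝ (⊤ : ℕ∞) (fun y : E => (‖y‖ ^ p : ℝ) • ψ y) := by
  rw [contDiff_iff_contDiffAt]
  intro x
  by_cases hx : x ∈ tsupport ψ
  · have hx0 : x ≠ 0 := fun h => h0 (h ▸ hx)
    exact ((contDiffAt_norm ℝ hx0).rpow_const_of_ne (norm_ne_zero_iff.2 hx0)).smul
      hsmooth.contDiffAt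
  · refine (contDiffAt_const (c := (0:ℂ))).congr_of_eventuallyEq ?_
    filter_upwards [(isOpen_compl_iff.2 (isClosed_tsupport ψ)).mem_nhds hx] with y hy
    simp [image_eq_zero_of_notMem_tsupport hy]

theorem myFderivApply {ψ : E → ℂ} (hsmooth : ContDiff ℝ (⊤ : ℕ∞) ψ)
    (x : E) (hx : x ≠ 0) (p : ℝ) (v : E) :
    fderiv ℝ (fun y : E => (‖y‖ ^ p : ℝ) • ψ y) x v
      = (p * ‖x‖ ^ (p - 2) * ⟪x, v⟫) • ψ x + (‖x‖ ^ p : ℝ) • fderiv ℝ ψ x v := by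
  have h := (myHasFDerivAt_norm_rpow x hx p).fun_smul
    ((hsmooth.differentiable (by simp) x).hasFDerivAt)
  rw [h.fderiv]
  rw [ContinuousLinearMap.add_apply, ContinuousLinearMap.smulRight_apply,
    ContinuousLinearMap.smul_apply, ContinuousLinearMap.smul_apply, innerSL_apply_apply]
  rw [add_comm, smul_eq_mul]

theorem complexKey (u p : ℂ) (B s : ℝ) :
    ((starRingEnd ℂ) u * ((2 * B * s) • p + (s ^ 2 : ℝ) • u)).re
      = ‖B • p + s • u‖ ^ 2 - B ^ 2 * ‖p‖ ^ 2 := by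
  simp only [Complex.real_smul, Complex.sq_norm, Complex.normSq_apply,
    Complex.add_re, Complex.add_im, Complex.mul_re, Complex.mul_im, Complex.conj_re,
    Complex.conj_im, Complex.ofReal_re, Complex.ofReal_im]
  ring

theorem myFderivZero {ψ : E → ℂ} {x : E} (hx : x ∉ tsupport ψ)
    (g : E → ℝ) : fderiv ℝ (fun y : E => g y • ψ y) x = 0 := by
  have h : (fun y : E => g y • ψ y) =ᶠ[nhds x] fun _ => (0:ℂ) := by
    filter_upwards [(isOpen_compl_iff.2 (isClosed_tsupport ψ)).mem_nhds hx] with y hy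
    simp [image_eq_zero_of_notMem_tsupport hy]
  rw [h.fderiv_eq, fderiv_fun_const]
  rfl

theorem myFderivZero' {ψ : E → ℂ} {x : E} (hx : x ∉ tsupport ψ) :
    fderiv ℝ ψ x = 0 := by
  have h : ψ =ᶠ[nhds x] fun _ => (0:ℂ) := by
    filter_upwards [(isOpen_compl_iff.2 (isClosed_tsupport ψ)).mem_nhds hx] with y hy
    exact image_eq_zero_of_notMem_tsupport hy
  rw [h.fderiv_eq, fderiv_fun_const]
  rfl

end Aux

theorem pointwiseKey (n : ℕ) {b : ℝ}
    (ψ : EuclideanSpace ℝ (Fin n) → ℂ) (hsmooth : ContDiff ℝ (⊤ : ℕ∞) ψ)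
    (h0 : (0 : EuclideanSpace ℝ (Fin n)) ∉ tsupport ψ) (x : EuclideanSpace ℝ (Fin n)) :
    (∑ i : Fin n,
        (starRingEnd ℂ) (fderiv ℝ ψ x (EuclideanSpace.single i 1)) *
          fderiv ℝ (fun y => (‖y‖ ^ b : ℝ) • ψ y) x (EuclideanSpace.single i 1)).re
      = (∑ i : Fin n,
          ‖fderiv ℝ (fun y : EuclideanSpace ℝ (Fin n) => (‖y‖ ^ (b / 2) : ℝ) • ψ y)
              x (EuclideanSpace.single i 1)‖ ^ 2)
        - b ^ 2 / 4 * (‖x‖ ^ (b - 2) * ‖ψ x‖ ^ 2) := by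
  by_cases hx : x ∈ tsupport ψ
  · have hx0 : x ≠ 0 := fun h => h0 (h ▸ hx)
    have hr : (0:ℝ) < ‖x‖ := norm_pos_iff.mpr hx0
    set r := ‖x‖ with hrdef
    have hs : ∀ i : Fin n, ⟪x, EuclideanSpace.single i (1:ℝ)⟫ = x i := by
      intro i; rw [EuclideanSpace.inner_single_right]; simp
    have hb2 : r ^ (b/2-2) * r ^ (b/2) = r ^ (b-2) := by
      rw [← Real.rpow_add hr]; congr 1; ring
    have hbb : (r ^ (b/2)) ^ 2 = r ^ b := by
      rw [sq, ← Real.rpow_add hr]; congr 1; ring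
    have e1 : ∀ i : Fin n, fderiv ℝ (fun y => (‖y‖ ^ b : ℝ) • ψ y) x (EuclideanSpace.single i 1)
        = (2 * ((b/2) * r ^ (b/2-2) * x i) * r ^ (b/2)) • ψ x
          + ((r ^ (b/2)) ^ 2 : ℝ) • fderiv ℝ ψ x (EuclideanSpace.single i 1) := by
      intro i
      rw [myFderivApply hsmooth x hx0 b, hs, hbb, ← hb2]
      ring_nf
      rw [hrdef]
    have e2 : ∀ i : Fin n,
        fderiv ℝ (fun y : EuclideanSpace ℝ (Fin n) => (‖y‖ ^ (b/2) : ℝ) • ψ y) x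
            (EuclideanSpace.single i 1)
        = ((b/2) * r ^ (b/2-2) * x i) • ψ x
          + (r ^ (b/2) : ℝ) • fderiv ℝ ψ x (EuclideanSpace.single i 1) := by
      intro i
      rw [myFderivApply hsmooth x hx0 (b/2), hs]
    simp only [e1, e2, Complex.re_sum, complexKey]
    rw [Finset.sum_sub_distrib]
    congr 1
    have hsum : ∑ i : Fin n, (x i) ^ 2 = r ^ 2 := by
      rw [hrdef, EuclideanSpace.norm_eq, Real.sq_sqrt (by positivity)]
      simp [sq_abs]
    have hC : (r ^ (b/2-2)) ^ 2 * r ^ 2 = r ^ (b-2) := by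
      rw [show b - 2 = (b/2-2) + ((b/2-2) + (1 + 1)) by ring, Real.rpow_add hr,
        Real.rpow_add hr, Real.rpow_add hr, Real.rpow_one]
      ring
    calc ∑ i : Fin n, ((b/2) * r ^ (b/2-2) * x i) ^ 2 * ‖ψ x‖ ^ 2
        = ((b/2) * r ^ (b/2-2)) ^ 2 * ‖ψ x‖ ^ 2 * ∑ i : Fin n, (x i) ^ 2 := by
          rw [Finset.mul_sum]; congr 1; ext i; ring
      _ = b ^ 2 / 4 * (r ^ (b-2) * ‖ψ x‖ ^ 2) := by rw [hsum, ← hC]; ring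
  · simp only [myFderivZero hx (fun y => ‖y‖ ^ b), myFderivZero hx (fun y => ‖y‖ ^ (b/2)),
      myFderivZero' hx, image_eq_zero_of_notMem_tsupport hx, ContinuousLinearMap.zero_apply,
      mul_zero, zero_mul, map_zero, norm_zero, Finset.sum_const_zero, Complex.zero_re]
    simp

/-- Ground state representation of `½(|p|²|q|^b + |q|^b|p|²)` for `n ≥ 3` and
`0 < b < n - 2`, on smooth `ψ` compactly supported in `ℝⁿ \ {0}`:
the Jordan form equals `L_{2,b,n} ∫ |x|^{b-2}|ψ|²` plus the quadratic form of
`|q|^{b/2}𝓗_{2,n}|q|^{b/2}`. -/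
theorem gradForm_ground_state_representation
    (n : ℕ) (hn : 3 ≤ n) (b : ℝ) (hb : 0 < b) (hbn : b < (n : ℝ) - 2)
    (ψ : EuclideanSpace ℝ (Fin n) → ℂ)
    (hsmooth : ContDiff ℝ (⊤ : ℕ∞) ψ) (hsupp : HasCompactSupport ψ)
    (h0 : (0 : EuclideanSpace ℝ (Fin n)) ∉ tsupport ψ) :
    gradForm n ψ (fun x => (‖x‖ ^ b : ℝ) • ψ x) =
      (4 * Real.Gamma (((n : ℝ) - b + 2) / 4) * Real.Gamma (((n : ℝ) + b + 2) / 4) /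
          (Real.Gamma (((n : ℝ) + b - 2) / 4) * Real.Gamma (((n : ℝ) - b - 2) / 4))) *
        (∫ x : EuclideanSpace ℝ (Fin n), ‖x‖ ^ (b - 2) * ‖ψ x‖ ^ 2) +
      ((∫ x : EuclideanSpace ℝ (Fin n),
          ∑ i : Fin n,
            ‖fderiv ℝ (fun y : EuclideanSpace ℝ (Fin n) => (‖y‖ ^ (b / 2) : ℝ) • ψ y)
                x (EuclideanSpace.single i 1)‖ ^ 2) -
        ((n : ℝ) - 2) ^ 2 / 4 *
          ∫ x : EuclideanSpace ℝ (Fin n), ‖x‖ ^ (b - 2) * ‖ψ x‖ ^ 2) := by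
  have hn3 : (3:ℝ) ≤ (n:ℝ) := by exact_mod_cast hn
  -- Gamma computation
  have hpos1 : (0:ℝ) < ((n:ℝ) - b - 2) / 4 := by linarith
  have hpos2 : (0:ℝ) < ((n:ℝ) + b - 2) / 4 := by linarith
  have hΓ : 4 * Real.Gamma (((n : ℝ) - b + 2) / 4) * Real.Gamma (((n : ℝ) + b + 2) / 4) /
          (Real.Gamma (((n : ℝ) + b - 2) / 4) * Real.Gamma (((n : ℝ) - b - 2) / 4))
        = (((n:ℝ) - b - 2) * ((n:ℝ) + b - 2)) / 4 := by
    rw [show ((n:ℝ) - b + 2) / 4 = ((n:ℝ) - b - 2) / 4 + 1 by ring,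
      show ((n:ℝ) + b + 2) / 4 = ((n:ℝ) + b - 2) / 4 + 1 by ring,
      Real.Gamma_add_one hpos1.ne', Real.Gamma_add_one hpos2.ne']
    have g1 : Real.Gamma (((n:ℝ) - b - 2) / 4) ≠ 0 := (Real.Gamma_pos_of_pos hpos1).ne'
    have g2 : Real.Gamma (((n:ℝ) + b - 2) / 4) ≠ 0 := (Real.Gamma_pos_of_pos hpos2).ne'
    field_simp
  -- the functions
  set φb : EuclideanSpace ℝ (Fin n) → ℂ := fun y => (‖y‖ ^ b : ℝ) • ψ y with hφb
  set φh : EuclideanSpace ℝ (Fin n) → ℂ := fun y => (‖y‖ ^ (b/2) : ℝ) • ψ y with hφh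
  have hφb_smooth : ContDiff ℝ (⊤ : ℕ∞) φb := mySmooth hsmooth h0 b
  have hφh_smooth : ContDiff ℝ (⊤ : ℕ∞) φh := mySmooth hsmooth h0 (b/2)
  -- integrands
  set F : EuclideanSpace ℝ (Fin n) → ℂ := fun x => ∑ i : Fin n,
      (starRingEnd ℂ) (fderiv ℝ ψ x (EuclideanSpace.single i 1)) *
        fderiv ℝ φb x (EuclideanSpace.single i 1) with hF
  set J : EuclideanSpace ℝ (Fin n) → ℝ := fun x => ∑ i : Fin n,
      ‖fderiv ℝ φh x (EuclideanSpace.single i 1)‖ ^ 2 with hJ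
  set I : EuclideanSpace ℝ (Fin n) → ℝ := fun x => ‖x‖ ^ (b - 2) * ‖ψ x‖ ^ 2 with hI
  -- integrability
  have hFc : Continuous F := by
    apply continuous_finset_sum
    intro i _
    exact (((hsmooth.continuous_fderiv (by simp)).clm_apply continuous_const).star).mul
      ((hφb_smooth.continuous_fderiv (by simp)).clm_apply continuous_const)
  have hFs : HasCompactSupport F := by
    apply HasCompactSupport.intro hsupp
    intro x hx
    simp only [hF, myFderivZero' hx, ContinuousLinearMap.zero_apply, map_zero, zero_mul,
      Finset.sum_const_zero]
  have hFint : Integrable F := hFc.integrable_of_hasCompactSupport hFs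
  have hJc : Continuous J := by
    apply continuous_finset_sum
    intro i _
    exact (((hφh_smooth.continuous_fderiv (by simp)).clm_apply continuous_const).norm).pow 2
  have hJs : HasCompactSupport J := by
    apply HasCompactSupport.intro hsupp
    intro x hx
    simp only [hJ, hφh, myFderivZero hx (fun y => ‖y‖ ^ (b/2)), ContinuousLinearMap.zero_apply,
      norm_zero]
    simp
  have hJint : Integrable J := hJc.integrable_of_hasCompactSupport hJs
  have hIc : Continuous I := by
    rw [continuous_iff_continuousAt]
    intro x
    by_cases hx : x ∈ tsupport ψ
    · have hx0 : x ≠ 0 := fun h => h0 (h ▸ hx)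
      exact ((continuous_norm.continuousAt).rpow_const
        (Or.inl (norm_ne_zero_iff.2 hx0))).mul ((hsmooth.continuous.norm.pow 2).continuousAt)
    · have h : I =ᶠ[nhds x] fun _ => (0:ℝ) := by
        filter_upwards [(isOpen_compl_iff.2 (isClosed_tsupport ψ)).mem_nhds hx] with y hy
        simp [hI, image_eq_zero_of_notMem_tsupport hy]
      exact ContinuousAt.congr continuousAt_const h.symm
  have hIs : HasCompactSupport I := by
    apply HasCompactSupport.intro hsupp
    intro x hx
    simp [hI, image_eq_zero_of_notMem_tsupport hx]
  have hIint : Integrable I := hIc.integrable_of_hasCompactSupport hIs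
  -- main computation
  have key : gradForm n ψ φb = (∫ x, J x) - b ^ 2 / 4 * ∫ x, I x := by
    have h1 : (∫ x, F x).re = ∫ x, (F x).re := by
      have := integral_re (μ := (volume : Measure (EuclideanSpace ℝ (Fin n)))) hFint
      simp only [RCLike.re_to_complex] at this
      exact this.symm
    have h2 : ∀ x, (F x).re = J x - b ^ 2 / 4 * I x := fun x =>
      pointwiseKey n ψ hsmooth h0 x
    calc gradForm n ψ φb = (∫ x, F x).re := rfl
      _ = ∫ x, (F x).re := h1
      _ = ∫ x, (J x - b ^ 2 / 4 * I x) := by simp only [h2]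
      _ = (∫ x, J x) - b ^ 2 / 4 * ∫ x, I x := by
          rw [integral_sub hJint (hIint.const_mul _), integral_const_mul]
  rw [key, hΓ]
  ring
end

section
/- Let n be a positive integer and a ∈ (0, n). Then the function b ↦ L_{a,b,n} := 2^a Γ((n−b+a)/4) Γ((n+b+a)/4) / (Γ((n+b−a)/4) Γ((n−b−a)/4)) is strictly monotone decreasing on the interval [0, n−a), where Γ is the real Gamma function. -/
/-!
With `d = a / 2` and `c = (n - a) / 4`, the constant is `2 ^ a · exp (φ (c - b/4) + φ (c + b/4))`
where `φ x = log Γ(x + d) - log Γ(x)`. By the Euler–Gauss formula for `log Γ`, `φ` is the limit of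
`d log N + ∑_{m ≤ N} (log (x + m) - log (x + m + d))`, a sum of concave functions, so `φ` is concave
on `(0, ∞)`, and strictly so thanks to its `m = 0` term. For a strictly concave function,
`f (c - t) + f (c + t)` strictly decreases as the two points move apart.
-/

open Real Set Filter Topology

theorem ConcaveOn.sum {ι E : Type*} [AddCommMonoid E] [Module ℝ E] {s : Set E} (hs : Convex ℝ s)
    (t : Finset ι) {f : ι → E → ℝ} (hf : ∀ i ∈ t, ConcaveOn ℝ s (f i)) :
    ConcaveOn ℝ s fun x => ∑ i ∈ t, f i x := by
  classical
  induction t using Finset.induction_on with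
  | empty => simpa using concaveOn_const 0 hs
  | insert i t hi ih =>
    simp only [Finset.sum_insert hi]
    exact (hf i (Finset.mem_insert_self i t)).add (ih fun j hj => hf j (Finset.mem_insert_of_mem hj))

theorem ConcaveOn.of_tendsto {ι E : Type*} [AddCommMonoid E] [Module ℝ E] {l : Filter ι} [l.NeBot]
    {s : Set E} {F : ι → E → ℝ} {f : E → ℝ} (hF : ∀ᶠ i in l, ConcaveOn ℝ s (F i))
    (hlim : ∀ x ∈ s, Tendsto (fun i => F i x) l (𝓝 (f x))) : ConcaveOn ℝ s f := by
  obtain ⟨i, hi⟩ := hF.exists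
  refine ⟨hi.1, fun x hx y hy a b ha hb hab => ?_⟩
  exact le_of_tendsto_of_tendsto (((hlim x hx).const_smul a).add ((hlim y hy).const_smul b))
    (hlim _ (hi.1 hx hy ha hb hab)) (hF.mono fun i hi => hi.2 hx hy ha hb hab)

theorem StrictConcaveOn.strictAntiOn_symmetric_sum {f : ℝ → ℝ} {c r : ℝ}
    (hf : StrictConcaveOn ℝ (Ioo (c - r) (c + r)) f) :
    StrictAntiOn (fun t => f (c - t) + f (c + t)) (Ico 0 r) := by
  rintro t₁ ⟨ht₁, -⟩ t₂ ⟨-, ht₂⟩ ht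
  have ht₂pos : 0 < t₂ := ht₁.trans_lt ht
  have hlo : c - t₂ ∈ Ioo (c - r) (c + r) := ⟨by linarith, by linarith⟩
  have hhi : c + t₂ ∈ Ioo (c - r) (c + r) := ⟨by linarith, by linarith⟩
  have hne : c - t₂ ≠ c + t₂ := by linarith
  -- `c ∓ t₁` are the two convex combinations of `c ∓ t₂` with weights `α, β` and `β, α`
  set α := (t₂ + t₁) / (2 * t₂)
  set β := (t₂ - t₁) / (2 * t₂)
  have hα : 0 < α := by positivity
  have hβ : 0 < β := div_pos (by linarith) (by positivity)
  have hαβ : α + β = 1 := by simp only [α, β]; field_simp; ring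
  have h₁ := hf.2 hlo hhi hne hα hβ hαβ
  have h₂ := hf.2 hlo hhi hne hβ hα (by linarith)
  have e₁ : α • (c - t₂) + β • (c + t₂) = c - t₁ := by simp only [α, β, smul_eq_mul]; field_simp; ring
  have e₂ : β • (c - t₂) + α • (c + t₂) = c + t₁ := by simp only [α, β, smul_eq_mul]; field_simp; ring
  rw [e₁] at h₁
  rw [e₂] at h₂
  simp only [smul_eq_mul] at h₁ h₂
  clear_value α β
  linear_combination h₁ + h₂ - (f (c - t₂) + f (c + t₂)) * hαβ

theorem strictConcaveOn_log_sub_log_add {d : ℝ} (hd : 0 < d) :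
    StrictConcaveOn ℝ (Ioi 0) fun x => log x - log (x + d) := by
  have hderiv : ∀ x ∈ Ioi (0 : ℝ), deriv (fun x => log x - log (x + d)) x = d / (x * (x + d)) := by
    intro x (hx : 0 < x)
    have h : HasDerivAt (fun x => log x - log (x + d)) (x⁻¹ - 1 / (x + d)) x :=
      (hasDerivAt_log hx.ne').sub (((hasDerivAt_id' x).add_const d).log (by positivity))
    rw [h.deriv]
    field_simp
    ring
  refine StrictAntiOn.strictConcaveOn_of_deriv (convex_Ioi 0) ?_ ?_
  · exact ContinuousOn.sub (continuousOn_log.mono fun x hx => ne_of_gt hx)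
      ((continuousOn_log.comp (continuousOn_id.add continuousOn_const)) fun x (hx : 0 < x) =>
        (by positivity : x + d ≠ 0))
  · rw [interior_Ioi]
    intro x hx y hy hxy
    rw [hderiv x hx, hderiv y hy]
    have hx : 0 < x := hx
    gcongr

theorem concaveOn_log_Gamma_add_sub_log_Gamma {d : ℝ} (hd : 0 < d) :
    ConcaveOn ℝ (Ioi 0) fun x => log (Gamma (x + d)) - log (Gamma x) := by
  refine ConcaveOn.of_tendsto
    (F := fun n x => BohrMollerup.logGammaSeq (x + d) n - BohrMollerup.logGammaSeq x n)
    (Eventually.of_forall fun n => ?_) fun x (hx : 0 < x) =>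
      (BohrMollerup.tendsto_log_gamma (by positivity)).sub (BohrMollerup.tendsto_log_gamma hx)
  have hseq : (fun x => BohrMollerup.logGammaSeq (x + d) n - BohrMollerup.logGammaSeq x n) =
      fun x => ∑ m ∈ Finset.range (n + 1), (log (x + m) - log (x + m + d)) + d * log n := by
    funext x
    simp only [BohrMollerup.logGammaSeq, Finset.sum_sub_distrib, add_right_comm x d]
    ring
  rw [hseq]
  refine (ConcaveOn.sum (convex_Ioi 0) _ fun m _ => ?_).add_const _
  exact ((strictConcaveOn_log_sub_log_add hd).concaveOn.translate_left (m : ℝ)).subset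
    (fun x (hx : 0 < x) => show (0 : ℝ) < m + x by positivity) (convex_Ioi 0)

theorem strictConcaveOn_log_Gamma_add_sub_log_Gamma {d : ℝ} (hd : 0 < d) :
    StrictConcaveOn ℝ (Ioi 0) fun x => log (Gamma (x + d)) - log (Gamma x) := by
  refine ((strictConcaveOn_log_sub_log_add hd).add_concaveOn
    (((concaveOn_log_Gamma_add_sub_log_Gamma hd).translate_left 1).subset
      (fun x (hx : 0 < x) => show (0 : ℝ) < 1 + x by positivity) (convex_Ioi 0))).congr ?_
  intro x (hx : 0 < x)
  have hxd : 0 < x + d := by positivity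
  simp only [Pi.add_apply, Function.comp_apply, add_right_comm x 1 d, Gamma_add_one hx.ne',
    Gamma_add_one hxd.ne', log_mul hx.ne' (Gamma_pos_of_pos hx).ne',
    log_mul hxd.ne' (Gamma_pos_of_pos hxd).ne']
  ring

theorem LConst_strictAntiOn_general
    (n : ℕ) (a : ℝ) (ha : a ∈ Set.Ioo (0 : ℝ) (n : ℝ)) :
    StrictAntiOn
      (fun b : ℝ =>
        2 ^ a * Real.Gamma (((n : ℝ) - b + a) / 4) * Real.Gamma (((n : ℝ) + b + a) / 4) /
          (Real.Gamma (((n : ℝ) + b - a) / 4) * Real.Gamma (((n : ℝ) - b - a) / 4)))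
      (Set.Ico (0 : ℝ) ((n : ℝ) - a)) := by
  obtain ⟨ha₀, han⟩ := ha
  set c := ((n : ℝ) - a) / 4 with hc
  set φ := fun x => log (Gamma (x + a / 2)) - log (Gamma x)
  have hφ : StrictAntiOn (fun t => φ (c - t) + φ (c + t)) (Ico 0 c) :=
    ((strictConcaveOn_log_Gamma_add_sub_log_Gamma (half_pos ha₀)).subset
      (fun x hx => show 0 < x by simpa using hx.1) (convex_Ioo _ _)).strictAntiOn_symmetric_sum
  refine StrictAntiOn.congr (f₁ := fun b => 2 ^ a * exp (φ (c - b / 4) + φ (c + b / 4)))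
    (fun b₁ hb₁ b₂ hb₂ h => ?_) fun b ⟨hb₀, hb⟩ => ?_
  · exact mul_lt_mul_of_pos_left (exp_lt_exp.2 (hφ ⟨by linarith [hb₁.1], by linarith [hb₁.2]⟩
      ⟨by linarith [hb₂.1], by linarith [hb₂.2]⟩ (by linarith))) (by positivity)
  · have hp : 0 < c - b / 4 := by linarith
    have hq : 0 < c + b / 4 := by linarith
    have hexp : ∀ x > 0, exp (φ x) = Gamma (x + a / 2) / Gamma x := fun x hx => by
      rw [exp_sub, exp_log (Gamma_pos_of_pos (by positivity)), exp_log (Gamma_pos_of_pos hx)]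
    simp only [exp_add, hexp _ hp, hexp _ hq]
    rw [show ((n : ℝ) - b + a) / 4 = c - b / 4 + a / 2 by ring,
      show ((n : ℝ) + b + a) / 4 = c + b / 4 + a / 2 by ring,
      show ((n : ℝ) + b - a) / 4 = c + b / 4 by ring, show ((n : ℝ) - b - a) / 4 = c - b / 4 by ring]
    ring

/-- The constant `L_{a,b,n}` is strictly monotone decreasing as a function of
`b` on the interval `[0, n - a)`. -/
theorem LConst_strictAntiOn
    (n : ℕ) (hn : 0 < n) (a : ℝ) (ha : a ∈ Set.Ioo (0 : ℝ) (n : ℝ)) :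
    StrictAntiOn
      (fun b : ℝ =>
        2 ^ a * Real.Gamma (((n : ℝ) - b + a) / 4) * Real.Gamma (((n : ℝ) + b + a) / 4) /
          (Real.Gamma (((n : ℝ) + b - a) / 4) * Real.Gamma (((n : ℝ) - b - a) / 4)))
      (Set.Ico (0 : ℝ) ((n : ℝ) - a)) :=
  LConst_strictAntiOn_general n a ha
end
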